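/- Fix a skew shape λ/μ, m ≥ 2, and i ∈ [m−1]. Every descent-resolution step applied to a benign tableau preserves the height vector. Consequently, for every reverse plane partition T of shape λ/μ with entries in [m] with f_i(T) ≠ 0 (respectively e_i(T) ≠ 0), one has h(f_i(T)) = h(T) and ceq(f_i(T)) = ceq(T) (respectively h(e_i(T)) = h(T) and ceq(e_i(T)) = ceq(T)). -/

import Mathlib

/-! ### Crystal operators on words -/

/-- The number of `i`'s minus the number of `(i+1)`'s among the first `k` letters of `w`
(viewing each `i` as a closing parenthesis and each `i+1` as an opening parenthesis). -/
def prefD (i : ℕ) (w : List ℕ) (k : ℕ) : ℤ :=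
  ((w.take k).count i : ℤ) - ((w.take k).count (i + 1) : ℤ)

/-- The number of `(i+1)`'s minus the number of `i`'s in the suffix of `w` starting at
position `k`. -/
def suffD (i : ℕ) (w : List ℕ) (k : ℕ) : ℤ :=
  ((w.drop k).count (i + 1) : ℤ) - ((w.drop k).count i : ℤ)

/-- Position `p` of `w` holds a letter `i` which, viewed as a closing parenthesis
(each `i+1` being an opening parenthesis, all other letters ignored), is unmatched in the
usual parenthesis matching. -/
def IsUnmatchedClose (i : ℕ) (w : List ℕ) (p : ℕ) : Prop :=
  w[p]? = some i ∧ ∀ q ≤ p, prefD i w q < prefD i w (p + 1)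

/-- Position `p` of `w` holds a letter `i+1` which, viewed as an opening parenthesis
(each `i` being a closing parenthesis, all other letters ignored), is unmatched in the
usual parenthesis matching. -/
def IsUnmatchedOpen (i : ℕ) (w : List ℕ) (p : ℕ) : Prop :=
  w[p]? = some (i + 1) ∧ ∀ q ≤ w.length, p < q → suffD i w q < suffD i w p

instance (i : ℕ) (w : List ℕ) (p : ℕ) : Decidable (IsUnmatchedClose i w p) := by
  unfold IsUnmatchedClose; infer_instance

instance (i : ℕ) (w : List ℕ) (p : ℕ) : Decidable (IsUnmatchedOpen i w p) := by
  unfold IsUnmatchedOpen; infer_instance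

/-- The (increasing) list of positions of unmatched `i`'s (closing parentheses) of `w`. -/
def unmatchedCloses (i : ℕ) (w : List ℕ) : List ℕ :=
  (List.range w.length).filter fun p => decide (IsUnmatchedClose i w p)

/-- The (increasing) list of positions of unmatched `(i+1)`'s (opening parentheses) of `w`. -/
def unmatchedOpens (i : ℕ) (w : List ℕ) : List ℕ :=
  (List.range w.length).filter fun p => decide (IsUnmatchedOpen i w p)

/-- The crystal operator `F_i` on words: replace the rightmost unmatched `i` by `i+1`;
`none` (i.e. `0`) if every `i` is matched. -/
def Fop (i : ℕ) (w : List ℕ) : Option (List ℕ) :=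
  match (unmatchedCloses i w).getLast? with
  | none => none
  | some p => some (w.set p (i + 1))

/-- The crystal operator `E_i` on words: replace the leftmost unmatched `i+1` by `i`;
`none` (i.e. `0`) if every `i+1` is matched. -/
def Eop (i : ℕ) (w : List ℕ) : Option (List ℕ) :=
  match (unmatchedOpens i w).head? with
  | none => none
  | some p => some (w.set p i)

/-- `s` is a string over the alphabet `{1, …, m}`. -/
def IsWordOver (m : ℕ) (s : List ℕ) : Prop := ∀ x ∈ s, 1 ≤ x ∧ x ≤ m

/-! ### Skew shapes and reverse plane partitions -/

/-- `(r, c)` is a cell of the skew shape `lam / mu` (matrix convention: `r` = row index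
counted from the top, `c` = column index, both 0-based). -/
def IsSkewCell (lam mu : YoungDiagram) (r c : ℕ) : Prop :=
  (r, c) ∈ lam.cells ∧ (r, c) ∉ mu.cells

instance (lam mu : YoungDiagram) (r c : ℕ) : Decidable (IsSkewCell lam mu r c) := by
  unfold IsSkewCell; infer_instance

/-- `T` is a reverse plane partition of shape `lam / mu` with entries in `{1, …, m}`:
entries weakly increase along rows and columns; `T` is normalized to be `0` outside the
shape. -/
def IsSkewRPP (lam mu : YoungDiagram) (m : ℕ) (T : ℕ → ℕ → ℕ) : Prop :=
  (∀ r c, ¬ IsSkewCell lam mu r c → T r c = 0) ∧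
  (∀ r c, IsSkewCell lam mu r c → 1 ≤ T r c ∧ T r c ≤ m) ∧
  (∀ r c, IsSkewCell lam mu r c → IsSkewCell lam mu r (c + 1) → T r c ≤ T r (c + 1)) ∧
  (∀ r c, IsSkewCell lam mu r c → IsSkewCell lam mu (r + 1) c → T r c ≤ T (r + 1) c)

/-- The reading word of `T`: ignore each entry equal to the entry directly below it, and read
the remaining entries left-to-right, bottom-to-top. -/
def readingWord (lam mu : YoungDiagram) (T : ℕ → ℕ → ℕ) : List ℕ :=
  ((List.range (lam.colLen 0)).reverse).flatMap fun r =>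
    ((List.range (lam.rowLen r)).filter fun c =>
      decide (IsSkewCell lam mu r c) &&
        ! (decide (IsSkewCell lam mu (r + 1) c) && decide (T (r + 1) c = T r c))).map (T r)

/-- The height vector of `T`: the sequence of (1-based) row indices of the entries of `T`
contributing to the reading word, in reading order. -/
def heightWord (lam mu : YoungDiagram) (T : ℕ → ℕ → ℕ) : List ℕ :=
  ((List.range (lam.colLen 0)).reverse).flatMap fun r =>
    ((List.range (lam.rowLen r)).filter fun c =>
      decide (IsSkewCell lam mu r c) &&
        ! (decide (IsSkewCell lam mu (r + 1) c) && decide (T (r + 1) c = T r c))).map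
      fun _ => r + 1

/-! ### Columns, descents and descent-resolution -/

/-- Column `c` of the tableau `T` (of shape `lam/mu`) contains an entry equal to `v`. -/
def ColHasVal (lam mu : YoungDiagram) (T : ℕ → ℕ → ℕ) (c v : ℕ) : Prop :=
  ∃ r ∈ Finset.range (lam.colLen c), IsSkewCell lam mu r c ∧ T r c = v

instance (lam mu : YoungDiagram) (T : ℕ → ℕ → ℕ) (c v : ℕ) :
    Decidable (ColHasVal lam mu T c v) := by
  unfold ColHasVal; infer_instance

/-- Column `c` is `i`-pure: it contains an `i` but no `i+1`. -/
def IsPureLow (i : ℕ) (lam mu : YoungDiagram) (T : ℕ → ℕ → ℕ) (c : ℕ) : Prop :=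
  ColHasVal lam mu T c i ∧ ¬ ColHasVal lam mu T c (i + 1)

/-- Column `c` is `(i+1)`-pure: it contains an `i+1` but no `i`. -/
def IsPureHigh (i : ℕ) (lam mu : YoungDiagram) (T : ℕ → ℕ → ℕ) (c : ℕ) : Prop :=
  ColHasVal lam mu T c (i + 1) ∧ ¬ ColHasVal lam mu T c i

/-- Column `c` is mixed: it contains both an `i` and an `i+1`. -/
def IsMixedCol (i : ℕ) (lam mu : YoungDiagram) (T : ℕ → ℕ → ℕ) (c : ℕ) : Prop :=
  ColHasVal lam mu T c i ∧ ColHasVal lam mu T c (i + 1)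

instance (i : ℕ) (lam mu : YoungDiagram) (T : ℕ → ℕ → ℕ) (c : ℕ) :
    Decidable (IsPureLow i lam mu T c) := by unfold IsPureLow; infer_instance
instance (i : ℕ) (lam mu : YoungDiagram) (T : ℕ → ℕ → ℕ) (c : ℕ) :
    Decidable (IsPureHigh i lam mu T c) := by unfold IsPureHigh; infer_instance

/-- The (0-based) row index of the lowest `i` in column `c`. -/
noncomputable def lowestLow (i : ℕ) (lam mu : YoungDiagram) (T : ℕ → ℕ → ℕ) (c : ℕ) : ℕ :=
  sSup {r | IsSkewCell lam mu r c ∧ T r c = i}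

/-- A descent: the box `(r, c)` contains `i+1` and the box directly to its right contains
`i`. -/
def IsDescent (i : ℕ) (lam mu : YoungDiagram) (T : ℕ → ℕ → ℕ) (r c : ℕ) : Prop :=
  IsSkewCell lam mu r c ∧ IsSkewCell lam mu r (c + 1) ∧ T r c = i + 1 ∧ T r (c + 1) = i

/-- `T` has no descents (for the letters `i`, `i+1`). -/
def NoDescent (i : ℕ) (lam mu : YoungDiagram) (T : ℕ → ℕ → ℕ) : Prop :=
  ∀ r c, ¬ IsDescent i lam mu T r c

/-- The value `v` is `i` or `i+1`. -/
def InBand (i v : ℕ) : Prop := v = i ∨ v = i + 1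

/-- A benign tableau (for the letter `i`): it is `0` outside the shape, all its entries in the
shape are `i` or `i+1`, its entries weakly increase in columns, and for any two mixed columns
`a` (to the left) and `b` (to the right), the lowest `i` of `a` is not in a higher row than
the lowest `i` of `b`. -/
def IsBenign (i : ℕ) (lam mu : YoungDiagram) (T : ℕ → ℕ → ℕ) : Prop :=
  (∀ r c, ¬ IsSkewCell lam mu r c → T r c = 0) ∧
  (∀ r c, IsSkewCell lam mu r c → T r c = i ∨ T r c = i + 1) ∧
  (∀ r c, IsSkewCell lam mu r c → IsSkewCell lam mu (r + 1) c → T r c ≤ T (r + 1) c) ∧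
  (∀ a b, a < b → IsMixedCol i lam mu T a → IsMixedCol i lam mu T b →
    lowestLow i lam mu T a ≤ lowestLow i lam mu T b)

/-- A descent-resolution step at columns `c, c+1` changes no entry outside these two columns,
and no entry whose value is not `i` or `i+1`. -/
def StepFrame (i : ℕ) (lam mu : YoungDiagram) (T T' : ℕ → ℕ → ℕ) (c : ℕ) : Prop :=
  ∀ r c', (¬ (c' = c ∨ c' = c + 1) ∨ ¬ (IsSkewCell lam mu r c' ∧ InBand i (T r c'))) →
    T' r c' = T r c'

/-- Descent-resolution step of type (2M): column `c` is `(i+1)`-pure, column `c+1` is mixed,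
and there is a descent between them; column `c` becomes mixed with its lowest `i` in the same
row as the lowest `i` of column `c+1`, and column `c+1` becomes `(i+1)`-pure. -/
def Step2M (i : ℕ) (lam mu : YoungDiagram) (T T' : ℕ → ℕ → ℕ) (c : ℕ) : Prop :=
  IsPureHigh i lam mu T c ∧ IsMixedCol i lam mu T (c + 1) ∧
  (∃ r, IsDescent i lam mu T r c) ∧ StepFrame i lam mu T T' c ∧
  (∀ r, IsSkewCell lam mu r c → InBand i (T r c) →
    T' r c = if r ≤ lowestLow i lam mu T (c + 1) then i else i + 1) ∧
  (∀ r, IsSkewCell lam mu r (c + 1) → InBand i (T r (c + 1)) → T' r (c + 1) = i + 1)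

/-- Descent-resolution step of type (M1): column `c` is mixed, column `c+1` is `i`-pure,
and there is a descent between them; column `c` becomes `i`-pure, and column `c+1` becomes
mixed with its lowest `i` in the same row as the lowest `i` of column `c`. -/
def StepM1 (i : ℕ) (lam mu : YoungDiagram) (T T' : ℕ → ℕ → ℕ) (c : ℕ) : Prop :=
  IsMixedCol i lam mu T c ∧ IsPureLow i lam mu T (c + 1) ∧
  (∃ r, IsDescent i lam mu T r c) ∧ StepFrame i lam mu T T' c ∧
  (∀ r, IsSkewCell lam mu r c → InBand i (T r c) → T' r c = i) ∧
  (∀ r, IsSkewCell lam mu r (c + 1) → InBand i (T r (c + 1)) →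
    T' r (c + 1) = if r ≤ lowestLow i lam mu T c then i else i + 1)

/-- Descent-resolution step of type (21): column `c` is `(i+1)`-pure, column `c+1` is
`i`-pure, and there is a descent between them; all `i`'s are replaced by `(i+1)`'s and vice
versa in both columns. -/
def Step21 (i : ℕ) (lam mu : YoungDiagram) (T T' : ℕ → ℕ → ℕ) (c : ℕ) : Prop :=
  IsPureHigh i lam mu T c ∧ IsPureLow i lam mu T (c + 1) ∧
  (∃ r, IsDescent i lam mu T r c) ∧ StepFrame i lam mu T T' c ∧
  (∀ r, IsSkewCell lam mu r c → InBand i (T r c) → T' r c = i) ∧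
  (∀ r, IsSkewCell lam mu r (c + 1) → InBand i (T r (c + 1)) → T' r (c + 1) = i + 1)

/-- A descent-resolution step: a step of one of the three types, at some pair of adjacent
columns. -/
def DRStep (i : ℕ) (lam mu : YoungDiagram) (T T' : ℕ → ℕ → ℕ) : Prop :=
  ∃ c, Step2M i lam mu T T' c ∨ StepM1 i lam mu T T' c ∨ Step21 i lam mu T T' c

/-! ### The crystal operators `f_i`, `e_i` on reverse plane partitions -/

/-- The list of pure columns (for the letters `i`, `i+1`), in left-to-right order. -/
def pureCols (i : ℕ) (lam mu : YoungDiagram) (T : ℕ → ℕ → ℕ) : List ℕ :=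
  (List.range (lam.rowLen 0)).filter fun c =>
    decide (IsPureLow i lam mu T c) || decide (IsPureHigh i lam mu T c)

/-- The parenthesis word of the pure columns: each `i`-pure column contributes the letter `i`
(a closing parenthesis) and each `(i+1)`-pure column the letter `i+1` (an opening one). -/
def colWord (i : ℕ) (lam mu : YoungDiagram) (T : ℕ → ℕ → ℕ) : List ℕ :=
  (pureCols i lam mu T).map fun c => if IsPureLow i lam mu T c then i else i + 1

/-- Replace all `i`'s by `(i+1)`'s in column `c`. -/
def raiseCol (i : ℕ) (lam mu : YoungDiagram) (T : ℕ → ℕ → ℕ) (c : ℕ) : ℕ → ℕ → ℕ :=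
  fun r c' => if c' = c ∧ IsSkewCell lam mu r c' ∧ T r c' = i then i + 1 else T r c'

/-- Replace all `(i+1)`'s by `i`'s in column `c`. -/
def lowerCol (i : ℕ) (lam mu : YoungDiagram) (T : ℕ → ℕ → ℕ) (c : ℕ) : ℕ → ℕ → ℕ :=
  fun r c' => if c' = c ∧ IsSkewCell lam mu r c' ∧ T r c' = i + 1 then i else T r c'

/-- `T' = f_i(T)`: the column `c` carrying the rightmost unmatched closing parenthesis (in the
parenthesation of the pure columns) has all its `i`'s replaced by `(i+1)`'s, and then the
descent-resolution algorithm is applied (i.e. descent-resolution steps are performed until no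
descent remains, reaching `T'`). -/
def fiRel (i : ℕ) (lam mu : YoungDiagram) (T T' : ℕ → ℕ → ℕ) : Prop :=
  ∃ p c, (unmatchedCloses i (colWord i lam mu T)).getLast? = some p ∧
    (pureCols i lam mu T)[p]? = some c ∧
    Relation.ReflTransGen (DRStep i lam mu) (raiseCol i lam mu T c) T' ∧
    NoDescent i lam mu T'

/-- `f_i(T) = 0`: every closing parenthesis (i.e. every `i`-pure column) is matched. -/
def fiZero (i : ℕ) (lam mu : YoungDiagram) (T : ℕ → ℕ → ℕ) : Prop :=
  unmatchedCloses i (colWord i lam mu T) = []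

/-- `T' = e_i(T)`: the column `c` carrying the leftmost unmatched opening parenthesis (in the
parenthesation of the pure columns) has all its `(i+1)`'s replaced by `i`'s, and then the
descent-resolution algorithm is applied. -/
def eiRel (i : ℕ) (lam mu : YoungDiagram) (T T' : ℕ → ℕ → ℕ) : Prop :=
  ∃ p c, (unmatchedOpens i (colWord i lam mu T)).head? = some p ∧
    (pureCols i lam mu T)[p]? = some c ∧
    Relation.ReflTransGen (DRStep i lam mu) (lowerCol i lam mu T c) T' ∧
    NoDescent i lam mu T'

/-- `e_i(T) = 0`: every opening parenthesis (i.e. every `(i+1)`-pure column) is matched. -/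
def eiZero (i : ℕ) (lam mu : YoungDiagram) (T : ℕ → ℕ → ℕ) : Prop :=
  unmatchedOpens i (colWord i lam mu T) = []

/-- The `ceq` statistic of `T`, as a weak composition `(c_1, c_2, …)` (with `ceqF … 0 = 0`):
its `i`-th entry (`i ≥ 1`, corresponding to 0-based rows `i-1` and `i`) is the number of
columns `c` such that the boxes `(i-1, c)` and `(i, c)` (0-based) both belong to `lam/mu`
and the entries of `T` in them are equal. -/
noncomputable def ceqF (lam mu : YoungDiagram) (T : ℕ → ℕ → ℕ) : ℕ → ℕ
  | 0 => 0
  | k + 1 =>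
    Nat.card {c : ℕ // IsSkewCell lam mu k c ∧ IsSkewCell lam mu (k + 1) c ∧
      T k c = T (k + 1) c}

/-! Entries other than `i`, `i + 1` never change, and a tableau whose columns increase and
whose rows increase except at descents stays so. On the entries `i`, `i + 1` of a column, the
vertical equalities are determined by the row of its lowest `i`, and each descent-resolution
step exchanges this datum between two adjacent columns, so every row keeps its number of
vertical equalities, that is, `ceq` is preserved; raising or lowering a pure column changes no
vertical equality at all. Finally, row `r` contributes to the reading word its cells minus
the `ceq_{r+1}` cells equal to the cell below, so `ceq` determines the height vector. -/

section Tableaux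

variable {lam mu : YoungDiagram} {i : ℕ} {S S' : ℕ → ℕ → ℕ}

theorem isSkewCell_of_le_of_le {r₁ c₁ r₂ c₂ r c : ℕ} (h₁ : IsSkewCell lam mu r₁ c₁)
    (h₂ : IsSkewCell lam mu r₂ c₂) (hr₁ : r₁ ≤ r) (hc₁ : c₁ ≤ c) (hr₂ : r ≤ r₂) (hc₂ : c ≤ c₂) :
    IsSkewCell lam mu r c :=
  ⟨lam.up_left_mem hr₂ hc₂ h₂.1, fun h => h₁.2 (mu.up_left_mem hr₁ hc₁ h)⟩

theorem colHasVal_iff {d v : ℕ} :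
    ColHasVal lam mu S d v ↔ ∃ r, IsSkewCell lam mu r d ∧ S r d = v :=
  ⟨fun ⟨r, _, hc, hv⟩ => ⟨r, hc, hv⟩, fun ⟨r, hc, hv⟩ =>
    ⟨r, Finset.mem_range.mpr (YoungDiagram.mem_iff_lt_colLen.mp hc.1), hc, hv⟩⟩

def VertEq (lam mu : YoungDiagram) (S : ℕ → ℕ → ℕ) (r d : ℕ) : Prop :=
  IsSkewCell lam mu r d ∧ IsSkewCell lam mu (r + 1) d ∧ S r d = S (r + 1) d

theorem ceqF_succ (k : ℕ) : ceqF lam mu S (k + 1) = Nat.card {d // VertEq lam mu S k d} := rfl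

theorem ceqF_succ_eq_countP (S : ℕ → ℕ → ℕ) (r : ℕ) [DecidablePred (VertEq lam mu S r)] :
    ceqF lam mu S (r + 1) =
      (List.range (lam.rowLen r)).countP fun d => decide (VertEq lam mu S r d) := by
  have hlt : ∀ d, VertEq lam mu S r d → d < lam.rowLen r := fun d hd =>
    YoungDiagram.mem_iff_lt_rowLen.mp hd.1.1
  rw [ceqF_succ, List.countP_eq_length_filter]
  calc Nat.card {d // VertEq lam mu S r d}
      = Nat.card {d // d ∈ (Finset.range (lam.rowLen r)).filter (VertEq lam mu S r)} :=
        Nat.card_congr (Equiv.subtypeEquivRight fun d => by simpa using fun hd => hlt d hd)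
    _ = _ := Nat.card_eq_finsetCard _

theorem length_heightRow_add_ceqF (S : ℕ → ℕ → ℕ) (r : ℕ) :
    ((List.range (lam.rowLen r)).filter fun d => decide (IsSkewCell lam mu r d) &&
        !(decide (IsSkewCell lam mu (r + 1) d) && decide (S (r + 1) d = S r d))).length +
      ceqF lam mu S (r + 1) =
    ((List.range (lam.rowLen r)).filter fun d => decide (IsSkewCell lam mu r d)).length := by
  classical
  rw [ceqF_succ_eq_countP, ← List.countP_eq_length_filter, ← List.countP_eq_length_filter]
  conv_rhs => rw [List.countP_eq_countP_filter_add _ _ fun d => decide (VertEq lam mu S r d),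
    List.countP_filter, List.countP_filter]
  rw [add_comm]
  congr 1 <;> refine List.countP_congr fun d _ => ?_ <;>
    have hsymm : S (r + 1) d = S r d ↔ S r d = S (r + 1) d := eq_comm <;>
    by_cases hd : IsSkewCell lam mu r d <;> simp [VertEq, hd, hsymm]

theorem heightWord_eq_of_ceqF_eq (h : ceqF lam mu S' = ceqF lam mu S) :
    heightWord lam mu S' = heightWord lam mu S := by
  unfold heightWord
  congr 1
  funext r
  rw [List.map_const', List.map_const']
  have h' := length_heightRow_add_ceqF (lam := lam) (mu := mu) S' r
  rw [h] at h'
  rw [← Nat.add_right_cancel (h'.trans (length_heightRow_add_ceqF S r).symm)]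

end Tableaux

section Relabel

variable {lam mu : YoungDiagram} {i : ℕ} {S S' : ℕ → ℕ → ℕ}

theorem ceqF_eq_of_forall_perm
    (h : ∀ k, ∃ σ : Equiv.Perm ℕ, ∀ d, VertEq lam mu S' k d ↔ VertEq lam mu S k (σ d)) :
    ceqF lam mu S' = ceqF lam mu S := by
  funext k
  cases k with
  | zero => rfl
  | succ k =>
    obtain ⟨σ, hσ⟩ := h k
    exact Nat.card_congr (σ.subtypeEquiv hσ)

theorem vertEq_congr {r d : ℕ} (h : ∀ r, S' r d = S r d) :
    VertEq lam mu S' r d ↔ VertEq lam mu S r d := by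
  simp only [VertEq, h]

def ColMonotone (lam mu : YoungDiagram) (S : ℕ → ℕ → ℕ) (d : ℕ) : Prop :=
  ∀ r, IsSkewCell lam mu r d → IsSkewCell lam mu (r + 1) d → S r d ≤ S (r + 1) d

theorem ColMonotone.le {d : ℕ} (h : ColMonotone lam mu S d) {r₁ r₂ : ℕ}
    (h₁ : IsSkewCell lam mu r₁ d) (h₂ : IsSkewCell lam mu r₂ d) (hr : r₁ ≤ r₂) :
    S r₁ d ≤ S r₂ d := by
  induction r₂, hr using Nat.le_induction with
  | base => exact le_rfl
  | succ n hn ih =>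
    have hn' : IsSkewCell lam mu n d := isSkewCell_of_le_of_le h₁ h₂ hn le_rfl n.le_succ le_rfl
    exact (ih hn').trans (h n hn' h₂)

def IsAlmostRPP (i : ℕ) (lam mu : YoungDiagram) (S : ℕ → ℕ → ℕ) : Prop :=
  (∀ d, ColMonotone lam mu S d) ∧
  ∀ r d, IsSkewCell lam mu r d → IsSkewCell lam mu r (d + 1) →
    S r d ≤ S r (d + 1) ∨ InBand i (S r d) ∧ InBand i (S r (d + 1))

def IsBandCell (i : ℕ) (lam mu : YoungDiagram) (S : ℕ → ℕ → ℕ) (r d : ℕ) : Prop :=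
  IsSkewCell lam mu r d ∧ InBand i (S r d)

def FixesOffBand (i : ℕ) (lam mu : YoungDiagram) (S S' : ℕ → ℕ → ℕ) : Prop :=
  ∀ r d, IsSkewCell lam mu r d → ¬ InBand i (S r d) → S' r d = S r d

/-- On the cells of column `d` where `S` has an entry `i` or `i + 1`, the entry of `S'` is `i`
on the rows satisfying `P` and `i + 1` on the others. -/
def BandProfile (i : ℕ) (lam mu : YoungDiagram) (S S' : ℕ → ℕ → ℕ) (d : ℕ) (P : ℕ → Prop) :
    Prop :=
  ∀ r, IsBandCell i lam mu S r d → P r ∧ S' r d = i ∨ ¬ P r ∧ S' r d = i + 1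

theorem BandProfile.inBand {d : ℕ} {P : ℕ → Prop} (h : BandProfile i lam mu S S' d P) {r : ℕ}
    (hr : IsBandCell i lam mu S r d) : InBand i (S' r d) := by
  rcases h r hr with ⟨-, h⟩ | ⟨-, h⟩
  exacts [Or.inl h, Or.inr h]

theorem BandProfile.vertEq_iff {d : ℕ} {P : ℕ → Prop} (h : BandProfile i lam mu S S' d P)
    {r : ℕ} (h₀ : IsBandCell i lam mu S r d) (h₁ : IsBandCell i lam mu S (r + 1) d) :
    VertEq lam mu S' r d ↔ (P r ↔ P (r + 1)) := by
  rcases h r h₀ with ⟨p₀, v₀⟩ | ⟨p₀, v₀⟩ <;> rcases h (r + 1) h₁ with ⟨p₁, v₁⟩ | ⟨p₁, v₁⟩ <;>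
    simp [VertEq, h₀.1, h₁.1, v₀, v₁, p₀, p₁]

theorem vertEq_iff_of_bandProfile (hfix : FixesOffBand i lam mu S S') {d : ℕ}
    {P Q : ℕ → Prop} (hP : BandProfile i lam mu S S d P) (hQ : BandProfile i lam mu S S' d Q)
    {r : ℕ} (h : (Q r ↔ Q (r + 1)) ↔ (P r ↔ P (r + 1))) :
    VertEq lam mu S' r d ↔ VertEq lam mu S r d := by
  by_cases hc₀ : IsSkewCell lam mu r d
  swap
  · simp [VertEq, hc₀]
  by_cases hc₁ : IsSkewCell lam mu (r + 1) d
  swap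
  · simp [VertEq, hc₁]
  by_cases hb₀ : InBand i (S r d) <;> by_cases hb₁ : InBand i (S (r + 1) d)
  · rw [hQ.vertEq_iff ⟨hc₀, hb₀⟩ ⟨hc₁, hb₁⟩, hP.vertEq_iff ⟨hc₀, hb₀⟩ ⟨hc₁, hb₁⟩, h]
  -- otherwise an entry outside `{i, i + 1}` is involved: it is unchanged, and differs from both
  all_goals
    have hb₀' := hQ.inBand (r := r); have hb₁' := hQ.inBand (r := r + 1)
    have e₀ := hfix r d hc₀; have e₁ := hfix (r + 1) d hc₁
    simp only [VertEq, IsBandCell, InBand, hc₀, hc₁, true_and] at *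
    omega

theorem ColMonotone.of_bandProfile {d : ℕ} {Q : ℕ → Prop} (hS : ColMonotone lam mu S d)
    (hfix : FixesOffBand i lam mu S S') (hQ : BandProfile i lam mu S S' d Q)
    (hanti : ∀ r, Q (r + 1) → Q r) : ColMonotone lam mu S' d := by
  intro r hc₀ hc₁
  have hle := hS r hc₀ hc₁
  have e₀ := hfix r d hc₀
  have e₁ := hfix (r + 1) d hc₁
  have q₀ := hQ r
  have q₁ := hQ (r + 1)
  simp only [IsBandCell, InBand, hc₀, hc₁, true_and] at *
  by_cases hb₀ : S r d = i ∨ S r d = i + 1 <;> by_cases hb₁ : S (r + 1) d = i ∨ S (r + 1) d = i + 1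
  · rcases q₀ hb₀ with ⟨p₀, v₀⟩ | ⟨p₀, v₀⟩ <;> rcases q₁ hb₁ with ⟨p₁, v₁⟩ | ⟨p₁, v₁⟩ <;>
      first | omega | exact absurd (hanti r p₁) p₀
  all_goals omega

theorem IsAlmostRPP.of_relabel (hS : IsAlmostRPP i lam mu S) (hfix : FixesOffBand i lam mu S S')
    (hcol : ∀ d, (∀ r, S' r d = S r d) ∨
      ∃ Q : ℕ → Prop, BandProfile i lam mu S S' d Q ∧ ∀ r, Q (r + 1) → Q r) :
    IsAlmostRPP i lam mu S' := by
  have hband : ∀ r d, IsBandCell i lam mu S r d → InBand i (S' r d) := fun r d hr => by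
    rcases hcol d with h | ⟨Q, hQ, -⟩
    · rw [h]; exact hr.2
    · exact hQ.inBand hr
  refine ⟨fun d => ?_, fun r d hc₀ hc₁ => ?_⟩
  · rcases hcol d with h | ⟨Q, hQ, hanti⟩
    · exact fun r hc₀ hc₁ => by rw [h, h]; exact hS.1 d r hc₀ hc₁
    · exact (hS.1 d).of_bandProfile hfix hQ hanti
  have e₀ := hfix r d hc₀
  have e₁ := hfix r (d + 1) hc₁
  have b₀ := hband r d
  have b₁ := hband r (d + 1)
  have hrow := hS.2 r d hc₀ hc₁
  simp only [IsBandCell, InBand, hc₀, hc₁, true_and] at *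
  omega

end Relabel

section Columns

variable {lam mu : YoungDiagram} {i : ℕ} {S : ℕ → ℕ → ℕ} {d : ℕ}

theorem lowestLow_spec (h : ColHasVal lam mu S d i) :
    IsSkewCell lam mu (lowestLow i lam mu S d) d ∧ S (lowestLow i lam mu S d) d = i ∧
      ∀ r, IsSkewCell lam mu r d → S r d = i → r ≤ lowestLow i lam mu S d := by
  have hbdd : BddAbove {r | IsSkewCell lam mu r d ∧ S r d = i} :=
    ⟨lam.colLen d, fun r hr => (YoungDiagram.mem_iff_lt_colLen.mp hr.1.1).le⟩
  obtain ⟨r, hr⟩ := colHasVal_iff.mp h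
  exact ⟨(Nat.sSup_mem ⟨r, hr⟩ hbdd).1, (Nat.sSup_mem ⟨r, hr⟩ hbdd).2,
    fun r' hc hv => le_csSup hbdd ⟨hc, hv⟩⟩

theorem bandProfile_lowestLow (hS : ColMonotone lam mu S d) (h : ColHasVal lam mu S d i) :
    BandProfile i lam mu S S d (· ≤ lowestLow i lam mu S d) := by
  obtain ⟨hLc, hLv, hLmax⟩ := lowestLow_spec h
  intro r ⟨hc, hb⟩
  by_cases hr : r ≤ lowestLow i lam mu S d
  · have := hS.le hc hLc hr
    unfold InBand at hb
    omega
  · exact Or.inr ⟨hr, hb.resolve_left fun hv => hr (hLmax r hc hv)⟩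

theorem IsMixedCol.succ_lowestLow (hS : ColMonotone lam mu S d) (h : IsMixedCol i lam mu S d) :
    IsSkewCell lam mu (lowestLow i lam mu S d + 1) d ∧
      S (lowestLow i lam mu S d + 1) d = i + 1 := by
  obtain ⟨hLc, hLv, hLmax⟩ := lowestLow_spec h.1
  obtain ⟨r, hc, hv⟩ := colHasVal_iff.mp h.2
  set L := lowestLow i lam mu S d
  have hLr : L < r := by
    by_contra! hrL
    have := hS.le hc hLc hrL
    omega
  have hc' : IsSkewCell lam mu (L + 1) d :=
    isSkewCell_of_le_of_le hLc hc L.le_succ le_rfl hLr le_rfl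
  have h₀ := hS L hLc hc'
  have h₁ := hS.le hc' hc hLr
  have h₂ : S (L + 1) d ≠ i := fun hv' => by have := hLmax _ hc' hv'; omega
  exact ⟨hc', by omega⟩

theorem IsPureLow.bandProfile (h : IsPureLow i lam mu S d) :
    BandProfile i lam mu S S d fun _ => True :=
  fun r ⟨hc, hb⟩ =>
    Or.inl ⟨trivial, hb.resolve_right fun hv => h.2 (colHasVal_iff.mpr ⟨r, hc, hv⟩)⟩

theorem IsPureHigh.bandProfile (h : IsPureHigh i lam mu S d) :
    BandProfile i lam mu S S d fun _ => False :=
  fun r ⟨hc, hb⟩ =>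
    Or.inr ⟨not_false, hb.resolve_left fun hv => h.2 (colHasVal_iff.mpr ⟨r, hc, hv⟩)⟩

end Columns

section Steps

variable {lam mu : YoungDiagram} {i : ℕ} {S S' : ℕ → ℕ → ℕ} {c : ℕ}

theorem bandProfile_of_eq_ite {d : ℕ} {P : ℕ → Prop} [DecidablePred P]
    (h : ∀ r, IsSkewCell lam mu r d → InBand i (S r d) → S' r d = if P r then i else i + 1) :
    BandProfile i lam mu S S' d P := fun r hr => by
  rw [h r hr.1 hr.2]
  by_cases hp : P r <;> simp [hp]

theorem StepFrame.eq_of_ne (h : StepFrame i lam mu S S' c) {d : ℕ} (h₀ : d ≠ c) (h₁ : d ≠ c + 1)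
    (r : ℕ) : S' r d = S r d :=
  h r d (Or.inl (by omega))

theorem StepFrame.fixesOffBand (h : StepFrame i lam mu S S' c) : FixesOffBand i lam mu S S' :=
  fun r d _ hb => h r d (Or.inr fun hh => hb hh.2)

/-- Every descent-resolution step exchanges the band profiles of the columns `c` and `c + 1`.
This changes no vertical equality except in a row where a profile switches from `i` to `i + 1`;
there the whole `2 × 2` square has entries in `{i, i + 1}`, and the two columns exchange their
vertical equalities. -/
theorem StepFrame.isAlmostRPP_and_ceqF_eq {P₀ P₁ : ℕ → Prop} (hS : IsAlmostRPP i lam mu S)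
    (hF : StepFrame i lam mu S S' c)
    (hP₀ : BandProfile i lam mu S S c P₀) (hP₁ : BandProfile i lam mu S S (c + 1) P₁)
    (hQ₀ : BandProfile i lam mu S S' c P₁) (hQ₁ : BandProfile i lam mu S S' (c + 1) P₀)
    (hanti₀ : ∀ r, P₀ (r + 1) → P₀ r) (hanti₁ : ∀ r, P₁ (r + 1) → P₁ r)
    (hbreak : ∀ k, ((P₀ k ↔ P₀ (k + 1)) ∧ (P₁ k ↔ P₁ (k + 1))) ∨
      IsBandCell i lam mu S k c ∧ IsBandCell i lam mu S (k + 1) c ∧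
        IsBandCell i lam mu S k (c + 1) ∧ IsBandCell i lam mu S (k + 1) (c + 1)) :
    IsAlmostRPP i lam mu S' ∧ ceqF lam mu S' = ceqF lam mu S := by
  have hfix := hF.fixesOffBand
  refine ⟨hS.of_relabel hfix fun d => ?_, ceqF_eq_of_forall_perm fun k => ?_⟩
  · rcases eq_or_ne d c with rfl | hd₀
    · exact Or.inr ⟨P₁, hQ₀, hanti₁⟩
    rcases eq_or_ne d (c + 1) with rfl | hd₁
    · exact Or.inr ⟨P₀, hQ₁, hanti₀⟩
    exact Or.inl (hF.eq_of_ne hd₀ hd₁)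
  have hoff : ∀ d, d ≠ c → d ≠ c + 1 → (VertEq lam mu S' k d ↔ VertEq lam mu S k d) :=
    fun d hd₀ hd₁ => vertEq_congr (hF.eq_of_ne hd₀ hd₁)
  rcases hbreak k with ⟨h₀, h₁⟩ | ⟨b₀, b₁, b₂, b₃⟩
  · refine ⟨1, fun d => ?_⟩
    rw [Equiv.Perm.one_apply]
    rcases eq_or_ne d c with rfl | hd₀
    · exact vertEq_iff_of_bandProfile hfix hP₀ hQ₀ (by tauto)
    rcases eq_or_ne d (c + 1) with rfl | hd₁
    · exact vertEq_iff_of_bandProfile hfix hP₁ hQ₁ (by tauto)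
    exact hoff d hd₀ hd₁
  · refine ⟨Equiv.swap c (c + 1), fun d => ?_⟩
    rcases eq_or_ne d c with rfl | hd₀
    · rw [Equiv.swap_apply_left, hQ₀.vertEq_iff b₀ b₁, hP₁.vertEq_iff b₂ b₃]
    rcases eq_or_ne d (c + 1) with rfl | hd₁
    · rw [Equiv.swap_apply_right, hQ₁.vertEq_iff b₂ b₃, hP₀.vertEq_iff b₀ b₁]
    rw [Equiv.swap_apply_of_ne_of_ne hd₀ hd₁]
    exact hoff d hd₀ hd₁

theorem Step2M.isAlmostRPP_and_ceqF_eq (hS : IsAlmostRPP i lam mu S)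
    (h : Step2M i lam mu S S' c) : IsAlmostRPP i lam mu S' ∧ ceqF lam mu S' = ceqF lam mu S := by
  obtain ⟨hpure, hmixed, ⟨r₀, hr₀c, hr₀c₁, hv₀, hv₁⟩, hF, hnew₀, hnew₁⟩ := h
  have hP₁ := bandProfile_lowestLow (hS.1 (c + 1)) hmixed.1
  obtain ⟨hLc₁, hLv₁, -⟩ := lowestLow_spec hmixed.1
  obtain ⟨hL₁c₁, hL₁v₁⟩ := hmixed.succ_lowestLow (hS.1 (c + 1))
  generalize lowestLow i lam mu S (c + 1) = L at *
  have hr₀L : r₀ ≤ L := by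
    rcases hP₁ r₀ ⟨hr₀c₁, Or.inl hv₁⟩ with ⟨h, -⟩ | ⟨-, h⟩
    exacts [h, by omega]
  have hLc : IsSkewCell lam mu L c := isSkewCell_of_le_of_le hr₀c hLc₁ hr₀L le_rfl le_rfl c.le_succ
  have hL₁c : IsSkewCell lam mu (L + 1) c :=
    isSkewCell_of_le_of_le hr₀c hL₁c₁ (by omega) le_rfl le_rfl c.le_succ
  have hvLc : S L c = i + 1 := by
    have := (hS.1 c).le hr₀c hLc hr₀L
    rcases hS.2 L c hLc hLc₁ with h | ⟨h, -⟩ <;> unfold InBand at * <;> omega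
  have hvL₁c : S (L + 1) c = i + 1 := by
    have := (hS.1 c).le hr₀c hL₁c (by omega)
    rcases hS.2 (L + 1) c hL₁c hL₁c₁ with h | ⟨h, -⟩ <;> unfold InBand at * <;> omega
  refine hF.isAlmostRPP_and_ceqF_eq hS hpure.bandProfile hP₁ (bandProfile_of_eq_ite hnew₀)
    (fun r hr => Or.inr ⟨not_false, hnew₁ r hr.1 hr.2⟩) (fun _ => id) (fun _ h => by omega)
    fun k => ?_
  rcases eq_or_ne k L with rfl | hk
  · exact Or.inr ⟨⟨hLc, Or.inr hvLc⟩, ⟨hL₁c, Or.inr hvL₁c⟩, ⟨hLc₁, Or.inl hLv₁⟩,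
      ⟨hL₁c₁, Or.inr hL₁v₁⟩⟩
  · exact Or.inl ⟨Iff.rfl, by omega⟩

theorem StepM1.isAlmostRPP_and_ceqF_eq (hS : IsAlmostRPP i lam mu S)
    (h : StepM1 i lam mu S S' c) : IsAlmostRPP i lam mu S' ∧ ceqF lam mu S' = ceqF lam mu S := by
  obtain ⟨hmixed, hpure, ⟨r₀, hr₀c, hr₀c₁, hv₀, hv₁⟩, hF, hnew₀, hnew₁⟩ := h
  have hP₀ := bandProfile_lowestLow (hS.1 c) hmixed.1
  obtain ⟨hLc, hLv, -⟩ := lowestLow_spec hmixed.1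
  obtain ⟨hL₁c, hL₁v⟩ := hmixed.succ_lowestLow (hS.1 c)
  generalize lowestLow i lam mu S c = L at *
  have hLr₀ : L < r₀ := by
    rcases hP₀ r₀ ⟨hr₀c, Or.inr hv₀⟩ with ⟨-, h⟩ | ⟨h, -⟩ <;> omega
  have hLc₁ : IsSkewCell lam mu L (c + 1) :=
    isSkewCell_of_le_of_le hLc hr₀c₁ le_rfl c.le_succ hLr₀.le le_rfl
  have hL₁c₁ : IsSkewCell lam mu (L + 1) (c + 1) :=
    isSkewCell_of_le_of_le hLc hr₀c₁ L.le_succ c.le_succ hLr₀ le_rfl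
  have hvc₁ : S L (c + 1) = i ∧ S (L + 1) (c + 1) = i := by
    have h₁ := hS.1 (c + 1) L hLc₁ hL₁c₁
    have h₂ := (hS.1 (c + 1)).le hL₁c₁ hr₀c₁ hLr₀
    rcases hS.2 L c hLc hLc₁ with h | ⟨-, h⟩ <;> unfold InBand at * <;> omega
  refine hF.isAlmostRPP_and_ceqF_eq hS hP₀ hpure.bandProfile
    (fun r hr => Or.inl ⟨trivial, hnew₀ r hr.1 hr.2⟩) (bandProfile_of_eq_ite hnew₁)
    (fun _ h => by omega) (fun _ _ => trivial) fun k => ?_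
  rcases eq_or_ne k L with rfl | hk
  · exact Or.inr ⟨⟨hLc, Or.inl hLv⟩, ⟨hL₁c, Or.inr hL₁v⟩, ⟨hLc₁, Or.inl hvc₁.1⟩,
      ⟨hL₁c₁, Or.inl hvc₁.2⟩⟩
  · exact Or.inl ⟨by omega, Iff.rfl⟩

theorem Step21.isAlmostRPP_and_ceqF_eq (hS : IsAlmostRPP i lam mu S)
    (h : Step21 i lam mu S S' c) : IsAlmostRPP i lam mu S' ∧ ceqF lam mu S' = ceqF lam mu S := by
  obtain ⟨hhigh, hlow, -, hF, hnew₀, hnew₁⟩ := h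
  exact hF.isAlmostRPP_and_ceqF_eq hS hhigh.bandProfile hlow.bandProfile
    (fun r hr => Or.inl ⟨trivial, hnew₀ r hr.1 hr.2⟩)
    (fun r hr => Or.inr ⟨not_false, hnew₁ r hr.1 hr.2⟩) (fun _ => id) (fun _ _ => trivial)
    fun _ => Or.inl ⟨Iff.rfl, Iff.rfl⟩

theorem DRStep.isAlmostRPP_and_ceqF_eq (hS : IsAlmostRPP i lam mu S)
    (h : DRStep i lam mu S S') : IsAlmostRPP i lam mu S' ∧ ceqF lam mu S' = ceqF lam mu S := by
  obtain ⟨c, h | h | h⟩ := h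
  exacts [h.isAlmostRPP_and_ceqF_eq hS, h.isAlmostRPP_and_ceqF_eq hS, h.isAlmostRPP_and_ceqF_eq hS]

theorem IsAlmostRPP.ceqF_eq_of_reflTransGen (hS : IsAlmostRPP i lam mu S)
    (h : Relation.ReflTransGen (DRStep i lam mu) S S') : ceqF lam mu S' = ceqF lam mu S := by
  suffices IsAlmostRPP i lam mu S' ∧ ceqF lam mu S' = ceqF lam mu S from this.2
  induction h with
  | refl => exact ⟨hS, rfl⟩
  | tail _ hstep ih =>
    obtain ⟨hS', hceq⟩ := hstep.isAlmostRPP_and_ceqF_eq ih.1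
    exact ⟨hS', hceq.trans ih.2⟩

end Steps

section Operators

variable {lam mu : YoungDiagram} {i m : ℕ} {S S' T T' : ℕ → ℕ → ℕ} {c : ℕ}

theorem IsSkewRPP.isAlmostRPP (hT : IsSkewRPP lam mu m T) : IsAlmostRPP i lam mu T :=
  ⟨fun d r h₀ h₁ => hT.2.2.2 r d h₀ h₁, fun r d h₀ h₁ => Or.inl (hT.2.2.1 r d h₀ h₁)⟩

theorem IsBenign.isAlmostRPP (hT : IsBenign i lam mu T) : IsAlmostRPP i lam mu T :=
  ⟨fun d r h₀ h₁ => hT.2.2.1 r d h₀ h₁,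
    fun r d h₀ h₁ => Or.inr ⟨hT.2.1 r d h₀, hT.2.1 r (d + 1) h₁⟩⟩

theorem isAlmostRPP_and_ceqF_eq_of_relabelCol {p q : Prop} (hS : IsAlmostRPP i lam mu S)
    (hfix : FixesOffBand i lam mu S S') (hoff : ∀ r d, d ≠ c → S' r d = S r d)
    (hP : BandProfile i lam mu S S c fun _ => p) (hQ : BandProfile i lam mu S S' c fun _ => q) :
    IsAlmostRPP i lam mu S' ∧ ceqF lam mu S' = ceqF lam mu S := by
  refine ⟨hS.of_relabel hfix fun d => ?_, ceqF_eq_of_forall_perm fun k => ⟨1, fun d => ?_⟩⟩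
  · rcases eq_or_ne d c with rfl | hd
    · exact Or.inr ⟨_, hQ, fun _ => id⟩
    · exact Or.inl fun r => hoff r d hd
  · rw [Equiv.Perm.one_apply]
    rcases eq_or_ne d c with rfl | hd
    · exact vertEq_iff_of_bandProfile hfix hP hQ (by simp)
    · exact vertEq_congr fun r => hoff r d hd

theorem IsPureLow.isAlmostRPP_and_ceqF_eq_raiseCol (h : IsPureLow i lam mu T c)
    (hT : IsAlmostRPP i lam mu T) :
    IsAlmostRPP i lam mu (raiseCol i lam mu T c) ∧ ceqF lam mu (raiseCol i lam mu T c) =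
      ceqF lam mu T :=
  isAlmostRPP_and_ceqF_eq_of_relabelCol hT (fun _ _ _ hb => if_neg fun h => hb (Or.inl h.2.2))
    (fun _ _ hd => if_neg fun h => hd h.1) h.bandProfile fun r hr =>
      Or.inr ⟨not_false, if_pos ⟨rfl, hr.1, ((h.bandProfile r hr).resolve_right (by simp)).2⟩⟩

theorem IsPureHigh.isAlmostRPP_and_ceqF_eq_lowerCol (h : IsPureHigh i lam mu T c)
    (hT : IsAlmostRPP i lam mu T) :
    IsAlmostRPP i lam mu (lowerCol i lam mu T c) ∧ ceqF lam mu (lowerCol i lam mu T c) =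
      ceqF lam mu T :=
  isAlmostRPP_and_ceqF_eq_of_relabelCol hT (fun _ _ _ hb => if_neg fun h => hb (Or.inr h.2.2))
    (fun _ _ hd => if_neg fun h => hd h.1) h.bandProfile fun r hr =>
      Or.inl ⟨trivial, if_pos ⟨rfl, hr.1, ((h.bandProfile r hr).resolve_left (by simp)).2⟩⟩

theorem colWord_getElem? (p : ℕ) :
    (colWord i lam mu T)[p]? =
      (pureCols i lam mu T)[p]?.map fun c => if IsPureLow i lam mu T c then i else i + 1 :=
  List.getElem?_map ..

theorem isPureLow_of_mem_unmatchedCloses {p : ℕ} (hp : p ∈ unmatchedCloses i (colWord i lam mu T))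
    (hc : (pureCols i lam mu T)[p]? = some c) : IsPureLow i lam mu T c := by
  have hw := (of_decide_eq_true (List.mem_filter.mp hp).2 : IsUnmatchedClose i _ p).1
  rw [colWord_getElem?, hc] at hw
  by_contra h
  simp [h] at hw

theorem isPureHigh_of_mem_unmatchedOpens {p : ℕ} (hp : p ∈ unmatchedOpens i (colWord i lam mu T))
    (hc : (pureCols i lam mu T)[p]? = some c) : IsPureHigh i lam mu T c := by
  have hw := (of_decide_eq_true (List.mem_filter.mp hp).2 : IsUnmatchedOpen i _ p).1
  rw [colWord_getElem?, hc] at hw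
  have hpure := (List.mem_filter.mp (List.mem_of_getElem? hc)).2
  simp only [Bool.or_eq_true, decide_eq_true_eq] at hpure
  exact hpure.resolve_left fun h => by simp [h] at hw

theorem fiRel.ceqF_eq (h : fiRel i lam mu T T') (hT : IsAlmostRPP i lam mu T) :
    ceqF lam mu T' = ceqF lam mu T := by
  obtain ⟨p, c, hp, hc, hsteps, -⟩ := h
  obtain ⟨hR, hceq⟩ := (isPureLow_of_mem_unmatchedCloses (List.mem_of_getLast? hp)
    hc).isAlmostRPP_and_ceqF_eq_raiseCol hT
  exact (hR.ceqF_eq_of_reflTransGen hsteps).trans hceq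

theorem eiRel.ceqF_eq (h : eiRel i lam mu T T') (hT : IsAlmostRPP i lam mu T) :
    ceqF lam mu T' = ceqF lam mu T := by
  obtain ⟨p, c, hp, hc, hsteps, -⟩ := h
  obtain ⟨hR, hceq⟩ := (isPureHigh_of_mem_unmatchedOpens (List.mem_of_head? hp)
    hc).isAlmostRPP_and_ceqF_eq_lowerCol hT
  exact (hR.ceqF_eq_of_reflTransGen hsteps).trans hceq

end Operators

theorem heights_and_ceq_preserved_general (lam mu : YoungDiagram) (m : ℕ) (i : ℕ) :
    (∀ T T', IsBenign i lam mu T → DRStep i lam mu T T' →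
      heightWord lam mu T' = heightWord lam mu T) ∧
    (∀ T T', IsSkewRPP lam mu m T → fiRel i lam mu T T' →
      heightWord lam mu T' = heightWord lam mu T ∧ ceqF lam mu T' = ceqF lam mu T) ∧
    (∀ T T', IsSkewRPP lam mu m T → eiRel i lam mu T T' →
      heightWord lam mu T' = heightWord lam mu T ∧ ceqF lam mu T' = ceqF lam mu T) := by
  refine ⟨fun T T' hT hstep => ?_, fun T T' hT h => ?_, fun T T' hT h => ?_⟩
  · exact heightWord_eq_of_ceqF_eq (hstep.isAlmostRPP_and_ceqF_eq hT.isAlmostRPP).2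
  · have hceq := h.ceqF_eq hT.isAlmostRPP
    exact ⟨heightWord_eq_of_ceqF_eq hceq, hceq⟩
  · have hceq := h.ceqF_eq hT.isAlmostRPP
    exact ⟨heightWord_eq_of_ceqF_eq hceq, hceq⟩

/-- Every descent-resolution step applied to a benign tableau preserves the
height vector; consequently, whenever `f_i(T) ≠ 0` (resp. `e_i(T) ≠ 0`), the operator `f_i`
(resp. `e_i`) preserves both the height vector and the `ceq` statistic. -/
theorem heights_and_ceq_preserved (lam mu : YoungDiagram) (hsub : mu ≤ lam)
    (m : ℕ) (hm : 2 ≤ m) (i : ℕ) (hi : 1 ≤ i) (him : i < m) :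
    (∀ T T', IsBenign i lam mu T → DRStep i lam mu T T' →
      heightWord lam mu T' = heightWord lam mu T) ∧
    (∀ T T', IsSkewRPP lam mu m T → fiRel i lam mu T T' →
      heightWord lam mu T' = heightWord lam mu T ∧ ceqF lam mu T' = ceqF lam mu T) ∧
    (∀ T T', IsSkewRPP lam mu m T → eiRel i lam mu T T' →
      heightWord lam mu T' = heightWord lam mu T ∧ ceqF lam mu T' = ceqF lam mu T) :=
  heights_and_ceq_preserved_general lam mu m i
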